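/- Let f(x,y) = (y² − x)²·((1/4)x + y + 1) − x²·(y² − x)·(x + 2y) + x⁵ ∈ ℂ[x,y], and let g(x,y) = f(x + y² − y⁵ + (1/2)y⁶, y) be the polynomial obtained by the substitution x ↦ x + y² − y⁵ + (1/2)y⁶. Then: (i) every monomial x^i y^j occurring in g with nonzero coefficient satisfies 13·i + 2·j ≥ 26; (ii) the coefficient of x² in g is nonzero; and (iii) the coefficient of y¹³ in g is nonzero. -/

import Mathlib

/-!
With `u = y² − x` and `c = x + 4y + 4`, the polynomial `4f = c·u² − 4x²(x + 2y)·u + 4x⁵` is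
quadratic in `u`, and completing the square gives `c·4f = W² − 16x⁴u` with
`W = c·u − 2x²(x + 2y)`, because `x·c − (x + 2y)² = −4u`. Give `x'` weight 13 and `y` weight 2.
The coordinate change `x = x' + y² − y⁵ + y⁶/2` is exactly what makes `W = −4x' + V` with `V` of
weight at least 14, while `x⁴u = y¹³ + (weight ≥ 28)`. Hence `c·4(g − x'² + y¹³)` has weight at
least 27, and since `c` has a nonzero constant term, so has `g − x'² + y¹³` (multiplicativity of
the weighted order on power series). So `x'² − y¹³` is the weighted initial form of `g`.
-/

open MvPolynomial

/-- The dehomogenization at `z = 1` of the plane quintic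
`Q₂ = {(y²−xz)²((1/4)x+y+z) − x²(y²−xz)(x+2y) + x⁵ = 0}`,
with `x = X 0` and `y = X 1`. -/
noncomputable def quinticF : MvPolynomial (Fin 2) ℂ :=
  ((X 1) ^ 2 - X 0) ^ 2 * (C (1/4) * X 0 + X 1 + 1)
    - (X 0) ^ 2 * ((X 1) ^ 2 - X 0) * (X 0 + 2 * X 1) + (X 0) ^ 5

/-- The polynomial obtained from `quinticF` by the substitution
`x ↦ x + y² − y⁵ + (1/2)y⁶` (the 6-jet coordinate change `x' = x − y² + y⁵ − (1/2)y⁶`). -/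
noncomputable def quinticG : MvPolynomial (Fin 2) ℂ :=
  aeval ![X 0 + (X 1) ^ 2 - (X 1) ^ 5 + C (1/2) * (X 1) ^ 6, X 1] quinticF

namespace MvPolynomial

variable {σ R : Type*}

@[norm_cast]
theorem coe_sub [CommRing R] (φ ψ : MvPolynomial σ R) :
    ((φ - ψ : MvPolynomial σ R) : MvPowerSeries σ R) = φ - ψ :=
  map_sub coeToMvPowerSeries.ringHom φ ψ

@[norm_cast]
theorem coe_neg [CommRing R] (φ : MvPolynomial σ R) :
    ((-φ : MvPolynomial σ R) : MvPowerSeries σ R) = -φ :=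
  map_neg coeToMvPowerSeries.ringHom φ

@[norm_cast]
theorem coe_ofNat [CommSemiring R] (n : ℕ) [n.AtLeastTwo] :
    ((ofNat(n) : MvPolynomial σ R) : MvPowerSeries σ R) = ofNat(n) :=
  map_ofNat coeToMvPowerSeries.ringHom n

end MvPolynomial

namespace MvPowerSeries

variable {σ R : Type*} (w : σ → ℕ)

section Semiring

variable [Semiring R] {f g : MvPowerSeries σ R} {k m n : ℕ∞}

theorem le_weightedOrder_add_of_le (hf : n ≤ f.weightedOrder w) (hg : n ≤ g.weightedOrder w) :
    n ≤ (f + g).weightedOrder w :=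
  (le_min hf hg).trans (min_weightedOrder_le_add w)

theorem le_weightedOrder_mul_of_le (hf : m ≤ f.weightedOrder w) (hg : n ≤ g.weightedOrder w)
    (h : k ≤ m + n) : k ≤ (f * g).weightedOrder w :=
  h.trans ((add_le_add hf hg).trans (le_weightedOrder_mul w))

theorem le_weightedOrder_mul_right_of_le (hf : n ≤ f.weightedOrder w) :
    n ≤ (f * g).weightedOrder w :=
  le_weightedOrder_mul_of_le w hf zero_le (add_zero n).ge

theorem le_weightedOrder_mul_left_of_le (hg : n ≤ g.weightedOrder w) :
    n ≤ (f * g).weightedOrder w :=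
  le_weightedOrder_mul_of_le w zero_le hg (zero_add n).ge

theorem le_weightedOrder_pow_of_le {j : ℕ} (hf : m ≤ f.weightedOrder w) (h : k ≤ j • m) :
    k ≤ (f ^ j).weightedOrder w :=
  h.trans ((nsmul_le_nsmul_right hf j).trans (le_weightedOrder_pow w j))

theorem le_weightedOrder_of_mul_left [NoZeroDivisors R] {c : MvPowerSeries σ R}
    (hc : constantCoeff c ≠ 0) (h : n ≤ (c * f).weightedOrder w) : n ≤ f.weightedOrder w := by
  have hc0 : c.weightedOrder w = 0 := by
    refine nonpos_iff_eq_zero.mp ?_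
    simpa using weightedOrder_le w (d := 0) (by simpa using hc)
  rwa [weightedOrder_mul, hc0, zero_add] at h

variable [Nontrivial R]

theorem weightedOrder_X (i : σ) : (X i : MvPowerSeries σ R).weightedOrder w = w i := by
  rw [X, weightedOrder_monomial_of_ne_zero w one_ne_zero, Finsupp.weight_single, one_smul]

theorem le_weightedOrder_X (i : σ) (h : k ≤ w i) : k ≤ (X i : MvPowerSeries σ R).weightedOrder w :=
  h.trans (weightedOrder_X w i).ge

theorem le_weightedOrder_X_pow (i : σ) {j : ℕ} (h : k ≤ j • (w i : ℕ∞)) :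
    k ≤ ((X i : MvPowerSeries σ R) ^ j).weightedOrder w :=
  le_weightedOrder_pow_of_le w (weightedOrder_X w i).ge h

end Semiring

theorem le_weightedOrder_sub_of_le [Ring R] {f g : MvPowerSeries σ R} {n : ℕ∞}
    (hf : n ≤ f.weightedOrder w) (hg : n ≤ g.weightedOrder w) : n ≤ (f - g).weightedOrder w := by
  rw [sub_eq_add_neg]
  exact le_weightedOrder_add_of_le w hf (by rwa [weightedOrder_neg])

end MvPowerSeries

namespace Quintic

/-! In the adapted coordinates `(x', y) = (X 0, X 1)`, `a` is the old coordinate `x` and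
`u = y² − a`. `V` is `W + 4x'` rearranged so that each term visibly has weight at least 14. -/

noncomputable def a : MvPolynomial (Fin 2) ℂ := X 0 + (X 1) ^ 2 - (X 1) ^ 5 + C (1/2) * (X 1) ^ 6

noncomputable def u : MvPolynomial (Fin 2) ℂ := X 1 ^ 2 - a

noncomputable def V : MvPolynomial (Fin 2) ℂ :=
  2 * u ^ 3 - u ^ 2 * (6 * X 1 ^ 2 + 4 * X 1 + 1) + 2 * u * X 1 ^ 3 * (3 * X 1 + 4)
    - X 0 * X 1 * (X 1 + 4) - X 1 ^ 7 * (1 + C (1/2) * X 1)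

noncomputable def initialForm : MvPolynomial (Fin 2) ℂ := X 0 ^ 2 - X 1 ^ 13

theorem quinticF_complete_square :
    (X 0 + 4 * X 1 + 4) * (4 * quinticF) =
      ((X 0 + 4 * X 1 + 4) * (X 1 ^ 2 - X 0) - 2 * X 0 ^ 2 * (X 0 + 2 * X 1)) ^ 2
        - 16 * X 0 ^ 4 * (X 1 ^ 2 - X 0) := by
  refine MvPolynomial.funext fun p ↦ ?_
  simp only [quinticF, map_mul, map_add, map_sub, map_pow, map_one, eval_X, eval_C, eval_ofNat]
  ring

theorem complete_square_term_eq :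
    (a + 4 * X 1 + 4) * u - 2 * a ^ 2 * (a + 2 * X 1) = V - 4 * X 0 := by
  refine MvPolynomial.funext fun p ↦ ?_
  simp only [V, u, a, map_mul, map_add, map_sub, map_pow, map_one, eval_X, eval_C, eval_ofNat]
  ring

theorem mul_quinticG_sub_initialForm :
    4 * (a + 4 * X 1 + 4) * (quinticG - initialForm) =
      -4 * (a + 4 * X 1) * initialForm - 8 * X 0 * V + V ^ 2
        + 16 * u ^ 2 * (a + X 1 ^ 2) * (a ^ 2 + X 1 ^ 4) - 16 * X 1 ^ 8 * (u - X 1 ^ 5) := by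
  have hF := congrArg (aeval ![a, X 1]) quinticF_complete_square
  simp only [map_mul, map_sub, map_add, map_pow, map_ofNat, aeval_X, Matrix.cons_val_zero,
    Matrix.cons_val_one] at hF
  change (a + 4 * X 1 + 4) * (4 * quinticG) = _ at hF
  have hu : u = X 1 ^ 2 - a := rfl
  rw [← hu, complete_square_term_eq, hu] at hF
  rw [hu, initialForm]
  linear_combination hF

open MvPowerSeries (weightedOrder weightedOrder_neg le_weightedOrder_add_of_le
  le_weightedOrder_sub_of_le le_weightedOrder_mul_of_le le_weightedOrder_mul_left_of_le
  le_weightedOrder_mul_right_of_le le_weightedOrder_pow_of_le le_weightedOrder_X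
  le_weightedOrder_X_pow)

local notation "ν" p:max => weightedOrder ![13, 2] (toMvPowerSeries (p : MvPolynomial (Fin 2) ℂ))

theorem le_weightedOrder_u_sub : 12 ≤ ν (u - X 1 ^ 5) := by
  rw [show u - X 1 ^ 5 = -(C (1/2) * X 1 ^ 6 + X 0) by rw [u, a]; ring]
  push_cast
  rw [weightedOrder_neg]
  exact le_weightedOrder_add_of_le _
    (le_weightedOrder_mul_left_of_le _ (le_weightedOrder_X_pow _ 1 (by norm_num)))
    (le_weightedOrder_X _ 0 (by norm_num))

theorem le_weightedOrder_u : 10 ≤ ν u := by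
  have h := le_weightedOrder_u_sub
  rw [show u = X 1 ^ 5 + (u - X 1 ^ 5) by ring]
  push_cast at h ⊢
  exact le_weightedOrder_add_of_le _ (le_weightedOrder_X_pow _ 1 (by norm_num))
    ((by norm_num : (10 : ℕ∞) ≤ 12).trans h)

theorem le_weightedOrder_a : 4 ≤ ν a := by
  rw [show a = X 1 ^ 2 - u by rw [u]; ring]
  push_cast
  exact le_weightedOrder_sub_of_le _ (le_weightedOrder_X_pow _ 1 (by norm_num))
    ((by norm_num : (4 : ℕ∞) ≤ 10).trans le_weightedOrder_u)

theorem le_weightedOrder_V : 14 ≤ ν V := by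
  have hu := le_weightedOrder_u
  rw [V]
  push_cast
  refine le_weightedOrder_sub_of_le _ (le_weightedOrder_sub_of_le _ (le_weightedOrder_add_of_le _
    (le_weightedOrder_sub_of_le _ ?_ ?_) ?_) ?_) ?_
  · exact le_weightedOrder_mul_left_of_le _ (le_weightedOrder_pow_of_le _ hu (by norm_num))
  · exact le_weightedOrder_mul_right_of_le _ (le_weightedOrder_pow_of_le _ hu (by norm_num))
  · exact le_weightedOrder_mul_right_of_le _ (le_weightedOrder_mul_of_le _
      (le_weightedOrder_mul_left_of_le _ hu) (le_weightedOrder_X_pow _ 1 le_rfl) (by norm_num))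
  · exact le_weightedOrder_mul_right_of_le _ (le_weightedOrder_mul_of_le _
      (le_weightedOrder_X _ 0 le_rfl) (le_weightedOrder_X _ 1 le_rfl) (by norm_num))
  · exact le_weightedOrder_mul_right_of_le _ (le_weightedOrder_X_pow _ 1 (by norm_num))

theorem le_weightedOrder_initialForm : 26 ≤ ν initialForm := by
  rw [initialForm]
  push_cast
  exact le_weightedOrder_sub_of_le _ (le_weightedOrder_X_pow _ 0 (by norm_num))
    (le_weightedOrder_X_pow _ 1 (by norm_num))

theorem le_weightedOrder_mul_quinticG_sub_initialForm :
    27 ≤ ν (4 * (a + 4 * X 1 + 4) * (quinticG - initialForm)) := by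
  have hu := le_weightedOrder_u
  have ha := le_weightedOrder_a
  have hV := le_weightedOrder_V
  have hu5 := le_weightedOrder_u_sub
  have h26 := le_weightedOrder_initialForm
  rw [mul_quinticG_sub_initialForm]
  push_cast at hu ha hV hu5 h26 ⊢
  refine le_weightedOrder_sub_of_le _ (le_weightedOrder_add_of_le _ (le_weightedOrder_add_of_le _
    (le_weightedOrder_sub_of_le _ ?_ ?_) ?_) ?_) ?_
  · exact le_weightedOrder_mul_of_le _ (le_weightedOrder_mul_left_of_le _
      (le_weightedOrder_add_of_le _ ((by norm_num : (2 : ℕ∞) ≤ 4).trans ha)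
        (le_weightedOrder_mul_left_of_le _ (le_weightedOrder_X _ 1 le_rfl)))) h26 (by norm_num)
  · exact le_weightedOrder_mul_of_le _ (le_weightedOrder_mul_left_of_le _
      (le_weightedOrder_X _ 0 le_rfl)) hV (by norm_num)
  · exact le_weightedOrder_pow_of_le _ hV (by norm_num)
  · exact le_weightedOrder_mul_of_le _ (le_weightedOrder_mul_of_le _
      (le_weightedOrder_mul_left_of_le _ (le_weightedOrder_pow_of_le _ hu le_rfl))
      (le_weightedOrder_add_of_le _ ha (le_weightedOrder_X_pow _ 1 (by norm_num))) le_rfl)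
      (le_weightedOrder_add_of_le _ (le_weightedOrder_pow_of_le _ ha le_rfl)
        (le_weightedOrder_X_pow _ 1 (by norm_num))) (by norm_num)
  · exact le_weightedOrder_mul_of_le _ (le_weightedOrder_mul_left_of_le _
      (le_weightedOrder_X_pow _ 1 le_rfl)) hu5 (by norm_num)

theorem le_weightedOrder_quinticG_sub_initialForm : 27 ≤ ν (quinticG - initialForm) := by
  have h := le_weightedOrder_mul_quinticG_sub_initialForm
  rw [MvPolynomial.coe_mul] at h
  refine MvPowerSeries.le_weightedOrder_of_mul_left _ ?_ h
  rw [← MvPowerSeries.coeff_zero_eq_constantCoeff_apply, MvPolynomial.coeff_coe,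
    ← constantCoeff_eq]
  simp [a, map_ofNat]

theorem coeff_quinticG_eq_coeff_initialForm {d : Fin 2 →₀ ℕ}
    (hd : Finsupp.weight ![13, 2] d < 27) : coeff d quinticG = coeff d initialForm := by
  rw [← sub_eq_zero, ← coeff_sub, ← MvPolynomial.coeff_coe]
  exact MvPowerSeries.coeff_eq_zero_of_lt_weightedOrder _
    (le_weightedOrder_quinticG_sub_initialForm.trans_lt' (by exact_mod_cast hd))

theorem le_weight_of_mem_support_quinticG {d : Fin 2 →₀ ℕ} (hd : d ∈ quinticG.support) :
    26 ≤ Finsupp.weight ![13, 2] d := by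
  have h26 : 26 ≤ ν quinticG := by
    rw [show quinticG = initialForm + (quinticG - initialForm) by ring, MvPolynomial.coe_add]
    exact le_weightedOrder_add_of_le _ le_weightedOrder_initialForm
      ((by norm_num : (26 : ℕ∞) ≤ 27).trans le_weightedOrder_quinticG_sub_initialForm)
  rw [mem_support_iff, ← MvPolynomial.coeff_coe] at hd
  exact_mod_cast h26.trans (MvPowerSeries.weightedOrder_le _ hd)

end Quintic

/-- In the adapted coordinates, the quintic `Q₂` is `x'² = a·y¹³ + h.o.t.` with `a ≠ 0`:
(i) every monomial `x^i y^j` occurring in `quinticG` satisfies `13·i + 2·j ≥ 26`;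
(ii) the coefficient of `x²` is nonzero; (iii) the coefficient of `y¹³` is nonzero. -/
theorem stmt_2 :
    (∀ d ∈ quinticG.support, 13 * d 0 + 2 * d 1 ≥ 26) ∧
    coeff (Finsupp.single 0 2) quinticG ≠ 0 ∧
    coeff (Finsupp.single 1 13) quinticG ≠ 0 := by
  refine ⟨fun d hd ↦ ?_, ?_, ?_⟩
  · have h := Quintic.le_weight_of_mem_support_quinticG hd
    rw [Finsupp.weight_eq_sum, Fin.sum_univ_two] at h
    simp only [smul_eq_mul, Matrix.cons_val_zero, Matrix.cons_val_one, Matrix.cons_val_fin_one] at h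
    omega
  · rw [Quintic.coeff_quinticG_eq_coeff_initialForm (by simp [Finsupp.weight_single])]
    simp [Quintic.initialForm, coeff_X_pow, Finsupp.single_eq_single_iff]
  · rw [Quintic.coeff_quinticG_eq_coeff_initialForm (by simp [Finsupp.weight_single])]
    simp [Quintic.initialForm, coeff_X_pow, Finsupp.single_eq_single_iff]
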